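/- Let R be a quasi-unital ring. The smoothening functor M ↦ R ⊗_R M from left R-modules to smooth left R-modules is right adjoint to the inclusion of smooth modules into all modules. Concretely: for any smooth left R-module N and any left R-module M, composition with the canonical map R ⊗_R M → M gives a natural bijection Hom_R(N, R ⊗_R M) ≅ Hom_R(N, M). -/

import Mathlib

open TensorProduct LinearMap

variable (R : Type) [NonUnitalRing R] [Module ℂ R] [SMulCommClass ℂ R R]
  [IsScalarTower ℂ R R]

/-- The bar differential `R ⊗ R ⊗ R → R ⊗ R`. -/
noncomputable def barD : (R ⊗[ℂ] (R ⊗[ℂ] R)) →ₗ[ℂ] R ⊗[ℂ] R :=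
  (rTensor R (mul' ℂ R)) ∘ₗ (TensorProduct.assoc ℂ R R R).symm.toLinearMap
    - lTensor R (mul' ℂ R)

/-- `R` is quasi-unital: the canonical map `R ⊗_R R → R` is an isomorphism. -/
def IsQuasiUnital : Prop :=
  ∃ f : ((R ⊗[ℂ] R) ⧸ LinearMap.range (barD R)) →ₗ[ℂ] R,
    f ∘ₗ (LinearMap.range (barD R)).mkQ = mul' ℂ R ∧ Function.Bijective f

variable {M : Type} [AddCommGroup M] [Module ℂ M]

/-- The bar differential `R ⊗ R ⊗ M → R ⊗ M` for a left module with bilinear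
action `act`. -/
noncomputable def barDM (act : R →ₗ[ℂ] M →ₗ[ℂ] M) :
    (R ⊗[ℂ] (R ⊗[ℂ] M)) →ₗ[ℂ] R ⊗[ℂ] M :=
  (rTensor M (mul' ℂ R)) ∘ₗ (TensorProduct.assoc ℂ R R M).symm.toLinearMap
    - lTensor R (TensorProduct.lift act)

/-- The smoothening `R ⊗_R M`. -/
noncomputable abbrev Smoothening (act : R →ₗ[ℂ] M →ₗ[ℂ] M) :=
  (R ⊗[ℂ] M) ⧸ LinearMap.range (barDM R act)

/-
Write `π : R ⊗ M → R ⊗_R M` for the quotient map. Since `N` is smooth, every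
element of `N` is a sum of elements `s • n`, so an `R`-linear `ψ : N → R ⊗_R M` is determined
by the values `ψ (s • n) = s • ψ n`. The action on `R ⊗_R M` satisfies
`s • x = π (s ⊗ ε x)`, so `ε ∘ ψ = φ` forces `ψ (s • n) = π (s ⊗ φ n)`: this gives uniqueness.
Conversely `1 ⊗ φ` descends to a map `R ⊗_R N → R ⊗_R M`, and composing it with the inverse of
the isomorphism `R ⊗_R N ≅ N` gives a `ψ` with exactly these values.
-/

theorem LinearMap.ext_of_surjective_lift {K A N P : Type} [CommSemiring K]
    [AddCommMonoid A] [Module K A] [AddCommMonoid N] [Module K N]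
    [AddCommMonoid P] [Module K P] {act : A →ₗ[K] N →ₗ[K] N}
    (hact : Function.Surjective (TensorProduct.lift act)) {f g : N →ₗ[K] P}
    (h : ∀ a n, f (act a n) = g (act a n)) : f = g :=
  (LinearMap.cancel_right hact).1 (TensorProduct.ext' h)

section Smoothening

variable {N : Type} [AddCommGroup N] [Module ℂ N]

theorem barDM_tmul (act : R →ₗ[ℂ] M →ₗ[ℂ] M) (r s : R) (m : M) :
    barDM R act (r ⊗ₜ[ℂ] (s ⊗ₜ[ℂ] m)) = (r * s) ⊗ₜ[ℂ] m - r ⊗ₜ[ℂ] act s m := by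
  simp [barDM, TensorProduct.assoc_symm_tmul]

theorem Smoothening.mkQ_mul_tmul (act : R →ₗ[ℂ] M →ₗ[ℂ] M) (r s : R) (m : M) :
    (LinearMap.range (barDM R act)).mkQ ((r * s) ⊗ₜ[ℂ] m) =
      (LinearMap.range (barDM R act)).mkQ (r ⊗ₜ[ℂ] act s m) :=
  (Submodule.Quotient.eq _).2 ⟨r ⊗ₜ[ℂ] (s ⊗ₜ[ℂ] m), barDM_tmul R act r s m⟩

variable {R}

theorem Smoothening.act_eq_mkQ_tmul_counit {act : R →ₗ[ℂ] M →ₗ[ℂ] M}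
    {actS : R →ₗ[ℂ] Smoothening R act →ₗ[ℂ] Smoothening R act}
    (hactS : ∀ (r s : R) (m : M),
      actS r ((LinearMap.range (barDM R act)).mkQ (s ⊗ₜ[ℂ] m)) =
        (LinearMap.range (barDM R act)).mkQ ((r * s) ⊗ₜ[ℂ] m))
    {ε : Smoothening R act →ₗ[ℂ] M}
    (hε : ε ∘ₗ (LinearMap.range (barDM R act)).mkQ = TensorProduct.lift act)
    (r : R) (x : Smoothening R act) :
    actS r x = (LinearMap.range (barDM R act)).mkQ (r ⊗ₜ[ℂ] ε x) := by
  suffices actS r = (LinearMap.range (barDM R act)).mkQ ∘ₗ TensorProduct.mk ℂ R M r ∘ₗ ε from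
    LinearMap.congr_fun this x
  refine Submodule.linearMap_qext _ (TensorProduct.ext' fun s m => ?_)
  have hεsm : ε ((LinearMap.range (barDM R act)).mkQ (s ⊗ₜ[ℂ] m)) = act s m :=
    LinearMap.congr_fun hε (s ⊗ₜ[ℂ] m)
  simp only [LinearMap.comp_apply, TensorProduct.mk_apply, hactS, hεsm,
    Smoothening.mkQ_mul_tmul]

theorem range_barDM_le_ker_mkQ_comp_lTensor {actM : R →ₗ[ℂ] M →ₗ[ℂ] M}
    {actN : R →ₗ[ℂ] N →ₗ[ℂ] N} (φ : N →ₗ[ℂ] M)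
    (hφ : ∀ (r : R) (n : N), φ (actN r n) = actM r (φ n)) :
    LinearMap.range (barDM R actN) ≤
      LinearMap.ker ((LinearMap.range (barDM R actM)).mkQ ∘ₗ lTensor R φ) := by
  rintro _ ⟨y, rfl⟩
  induction y using TensorProduct.induction_on with
  | zero => simp
  | add a b ha hb => simpa only [map_add] using add_mem ha hb
  | tmul r y =>
    induction y using TensorProduct.induction_on with
    | zero => simp
    | add a b ha hb => simpa only [TensorProduct.tmul_add, map_add] using add_mem ha hb
    | tmul s n =>
      rw [LinearMap.mem_ker, LinearMap.comp_apply, barDM_tmul, map_sub, lTensor_tmul,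
        lTensor_tmul, hφ, map_sub, Smoothening.mkQ_mul_tmul, sub_self]

noncomputable def Smoothening.map {actM : R →ₗ[ℂ] M →ₗ[ℂ] M} {actN : R →ₗ[ℂ] N →ₗ[ℂ] N}
    (φ : N →ₗ[ℂ] M) (hφ : ∀ (r : R) (n : N), φ (actN r n) = actM r (φ n)) :
    Smoothening R actN →ₗ[ℂ] Smoothening R actM :=
  (LinearMap.range (barDM R actN)).liftQ _ (range_barDM_le_ker_mkQ_comp_lTensor φ hφ)

theorem Smoothening.map_mkQ_tmul {actM : R →ₗ[ℂ] M →ₗ[ℂ] M} {actN : R →ₗ[ℂ] N →ₗ[ℂ] N}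
    (φ : N →ₗ[ℂ] M) (hφ : ∀ (r : R) (n : N), φ (actN r n) = actM r (φ n)) (s : R) (n : N) :
    Smoothening.map φ hφ ((LinearMap.range (barDM R actN)).mkQ (s ⊗ₜ[ℂ] n)) =
      (LinearMap.range (barDM R actM)).mkQ (s ⊗ₜ[ℂ] φ n) :=
  rfl

end Smoothening

theorem smoothening_right_adjoint
    -- the module `M`
    (actM : R →ₗ[ℂ] M →ₗ[ℂ] M)
    -- the left `R`-action on the smoothening `S = R ⊗_R M`
    (actS : R →ₗ[ℂ] Smoothening R actM →ₗ[ℂ] Smoothening R actM)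
    (hactS : ∀ (r s : R) (m : M),
      actS r ((LinearMap.range (barDM R actM)).mkQ (s ⊗ₜ[ℂ] m)) =
        (LinearMap.range (barDM R actM)).mkQ ((r * s) ⊗ₜ[ℂ] m))
    -- the canonical map `ε : S → M`
    (ε : Smoothening R actM →ₗ[ℂ] M)
    (hε : ε ∘ₗ (LinearMap.range (barDM R actM)).mkQ = TensorProduct.lift actM)
    -- a smooth module `N`
    (N : Type) [AddCommGroup N] [Module ℂ N]
    (actN : R →ₗ[ℂ] N →ₗ[ℂ] N)
    (hactN : ∀ (r s : R) (n : N), actN (r * s) n = actN r (actN s n))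
    (hNsmooth : ∃ g : ((R ⊗[ℂ] N) ⧸ LinearMap.range (barDM R actN)) →ₗ[ℂ] N,
      g ∘ₗ (LinearMap.range (barDM R actN)).mkQ = TensorProduct.lift actN ∧
      Function.Bijective g) :
    ∀ φ : N →ₗ[ℂ] M, (∀ (r : R) (n : N), φ (actN r n) = actM r (φ n)) →
      ∃! ψ : N →ₗ[ℂ] Smoothening R actM,
        (∀ (r : R) (n : N), ψ (actN r n) = actS r (ψ n)) ∧ ε ∘ₗ ψ = φ := by
  intro φ hφ
  obtain ⟨g, hg, hg_bij⟩ := hNsmooth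
  have hlift_surj : Function.Surjective (TensorProduct.lift actN) :=
    hg ▸ hg_bij.2.comp (Submodule.mkQ_surjective _)
  let e := LinearEquiv.ofBijective g hg_bij
  let ψ₀ := Smoothening.map φ hφ ∘ₗ e.symm.toLinearMap
  have hψ₀ : ∀ s n, ψ₀ (actN s n) = (LinearMap.range (barDM R actM)).mkQ (s ⊗ₜ[ℂ] φ n) := by
    intro s n
    have hgsn : e ((LinearMap.range (barDM R actN)).mkQ (s ⊗ₜ[ℂ] n)) = actN s n :=
      LinearMap.congr_fun hg (s ⊗ₜ[ℂ] n)
    simp only [ψ₀, LinearMap.comp_apply, LinearEquiv.coe_coe, ← hgsn,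
      LinearEquiv.symm_apply_apply, Smoothening.map_mkQ_tmul]
  have hactS_eq := Smoothening.act_eq_mkQ_tmul_counit hactS hε
  refine ⟨ψ₀, ⟨fun r n => ?_, ?_⟩, fun ψ ⟨hψ_act, hψ_ε⟩ => ?_⟩
  · refine LinearMap.congr_fun (f := ψ₀ ∘ₗ actN r) (g := actS r ∘ₗ ψ₀)
      (LinearMap.ext_of_surjective_lift hlift_surj fun s n => ?_) n
    simp only [LinearMap.comp_apply, ← hactN, hψ₀, hactS]
  · refine LinearMap.ext_of_surjective_lift hlift_surj fun s n => ?_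
    rw [LinearMap.comp_apply, hψ₀, ← LinearMap.comp_apply ε, hε, lift.tmul, hφ]
  · refine LinearMap.ext_of_surjective_lift hlift_surj fun s n => ?_
    rw [hψ_act, hactS_eq, ← LinearMap.comp_apply ε, hψ_ε, hψ₀]
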